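/- Let S be a submonoid of ℕ². Then S is gap absorbing if and only if S is an ideal extension of ℕ². -/

import Mathlib

open Pointwise

section Defs

variable {M : Type*} [AddCommMonoid M] [PartialOrder M]

/-- `S* = S \ {0}`. -/
def Sstar (S : AddSubmonoid M) : Set M := (S : Set M) \ {0}

/-- The set of gaps `H(S)`, the complement of `S`. -/
def Gaps (S : AddSubmonoid M) : Set M := (S : Set M)ᶜ

/-- The set of atoms `A(S) = S* \ (S* + S*)`. -/
def Atoms (S : AddSubmonoid M) : Set M := Sstar S \ (Sstar S + Sstar S)

/-- `S` is an ideal extension: `S* + M ⊆ S*`. -/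
def IsIdealExtension (S : AddSubmonoid M) : Prop :=
  ∀ s ∈ Sstar S, ∀ x : M, s + x ∈ Sstar S

/-- `S` is gap absorbing. -/
def IsGapAbsorbing (S : AddSubmonoid M) : Prop :=
  Gaps S + Gaps S ⊆ Gaps S ∪ Atoms S ∪ (Atoms S + Atoms S) ∧
  Gaps S + Atoms S ⊆ Atoms S ∪ (Atoms S + Atoms S)

/-- `M(S)`: minimal elements of `S*` with respect to `≤`. -/
def Mins (S : AddSubmonoid M) : Set M :=
  {m | m ∈ Sstar S ∧ ∀ t ∈ Sstar S, t ≤ m → t = m}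

/-- `n`-fold sumset, with `0`-fold sumset `{0}`. -/
def nfold : ℕ → Set M → Set M
  | 0, _ => {0}
  | n + 1, X => nfold n X + X

/-- The set of lengths `L(s) = {n : s ∈ nA(S)}`. -/
def Lset (S : AddSubmonoid M) (s : M) : Set ℕ := {n | s ∈ nfold n (Atoms S)}

/-- The minimal factorization length `ℓ(s)`. -/
noncomputable def minLen (S : AddSubmonoid M) (s : M) : ℕ := sInf (Lset S s)

/-- `X` is closed under intervals. -/
def ClosedUnderIntervals (X : Set M) : Prop :=
  ∀ u ∈ X, ∀ v ∈ X, u ≤ v → Set.Icc u v ⊆ X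

/-- `a ≤_S b`, i.e. `b - a ∈ S`. -/
def dvdS (S : AddSubmonoid M) (a b : M) : Prop := ∃ t ∈ S, a + t = b

end Defs

/-!
Write `I = S*`. If `S` is an ideal extension, `I` is an upper set of `ℕ²`, gaps lie outside
`I + I ⊆ S`, and the atoms are `I \ (I + I)`. Suppose `p ∉ I`, `q ∉ I + I` and `p + q ∈ I + I`.
Among the splittings `p + q = u + v` with `u, v ∈ I` take one minimising the taxicab distance
from `(u, v)` to `(p, q)`. If `u ∈ I + I`, then `u ≰ p` lets us move one unit from `u` to `v`
towards `(p, q)` without leaving `I`; symmetrically for `v`. So `u` and `v` are atoms.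

Conversely, in a gap absorbing `S` every element of `S*` has an atom `a` as a summand, and for a
gap `x` the sum `x + a` lies in `A(S) ∪ (A(S) + A(S)) ⊆ S*`.
-/

section CanonicallyOrdered

variable {M : Type*} [AddCommMonoid M] {S : AddSubmonoid M}

theorem sstar_add_sstar_subset : Sstar S + Sstar S ⊆ S := by
  rintro _ ⟨a, ha, b, hb, rfl⟩
  exact S.add_mem ha.1 hb.1

variable [PartialOrder M] [CanonicallyOrderedAdd M]

theorem IsUpperSet.add_left' {s t : Set M} (ht : IsUpperSet t) : IsUpperSet (s + t) := by
  rintro _ b hle ⟨x, hx, y, hy, rfl⟩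
  obtain ⟨c, rfl⟩ := exists_add_of_le hle
  exact ⟨x, hx, y + c, ht le_self_add hy, (add_assoc x y c).symm⟩

theorem IsIdealExtension.isUpperSet (hS : IsIdealExtension S) : IsUpperSet (Sstar S) := by
  intro a b hab ha
  obtain ⟨c, rfl⟩ := exists_add_of_le hab
  exact hS a ha c

theorem add_mem_sstar {s t : M} (hs : s ∈ Sstar S) (ht : t ∈ S) : s + t ∈ Sstar S :=
  ⟨S.add_mem hs.1 ht, fun h => hs.2 (add_eq_zero.mp h).1⟩

theorem atoms_add_atoms_subset_sstar : Atoms S + Atoms S ⊆ Sstar S := by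
  rintro _ ⟨a, ha, b, hb, rfl⟩
  exact add_mem_sstar ha.1 hb.1.1

theorem exists_atom_add_eq [IsLeftCancelAdd M] [WellFoundedLT M] {s : M} (hs : s ∈ Sstar S) :
    ∃ a ∈ Atoms S, ∃ t ∈ S, a + t = s := by
  induction s using WellFoundedLT.induction with
  | _ s ih =>
    by_cases hsA : s ∈ Sstar S + Sstar S
    · obtain ⟨b, hb, c, hc, rfl⟩ := hsA
      have hbc : b < b + c := lt_of_le_of_ne le_self_add fun h => hc.2 (left_eq_add.mp h)
      obtain ⟨a, ha, t, ht, rfl⟩ := ih b hbc hb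
      exact ⟨a, ha, t + c, S.add_mem ht hc.1, (add_assoc a t c).symm⟩
    · exact ⟨s, ⟨hs, hsA⟩, 0, S.zero_mem, add_zero s⟩

theorem isIdealExtension_of_gaps_add_atoms_subset [IsLeftCancelAdd M] [WellFoundedLT M]
    (h : Gaps S + Atoms S ⊆ Atoms S ∪ (Atoms S + Atoms S)) : IsIdealExtension S := by
  intro s hs x
  by_cases hx : x ∈ S
  · exact add_mem_sstar hs hx
  obtain ⟨a, ha, t, ht, rfl⟩ := exists_atom_add_eq hs
  have hxa : x + a ∈ Sstar S := by
    rcases h ⟨x, hx, a, ha, rfl⟩ with hA | hAA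
    exacts [hA.1, atoms_add_atoms_subset_sstar hAA]
  rw [add_right_comm, add_comm a x]
  exact add_mem_sstar hxa ht

end CanonicallyOrdered

section UpperSet

variable {I : Set (ℕ × ℕ)}

def taxicabDist (u v : ℕ × ℕ) : ℕ := Nat.dist u.1 v.1 + Nat.dist u.2 v.2

theorem mem_of_add_unit_mem_add (hI : IsUpperSet I) {z e : ℕ × ℕ}
    (he : e = (1, 0) ∨ e = (0, 1)) (hz : z + e ∈ I + I) : z ∈ I := by
  obtain ⟨a, ha, b, hb, hab⟩ := hz
  -- whichever summand carries the unit `e`, the other one lies below `z`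
  have : a ≤ z ∨ b ≤ z := by
    rcases he with rfl | rfl <;>
      simp only [Prod.ext_iff, Prod.le_def, Prod.fst_add, Prod.snd_add] at hab ⊢ <;> omega
  rcases this with h | h
  exacts [hI h ha, hI h hb]

theorem exists_closer_splitting (hI : IsUpperSet I) {p q u v : ℕ × ℕ} (huv : u + v = p + q)
    (hu : u ∈ I + I) (hup : ¬ u ≤ p) (hv : v ∈ I) :
    ∃ u' ∈ I, ∃ v' ∈ I, u' + v' = p + q ∧
      taxicabDist u' p + taxicabDist v' q < taxicabDist u p + taxicabDist v q := by
  simp only [Prod.le_def, not_and_or, not_le] at hup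
  simp only [Prod.ext_iff, Prod.fst_add, Prod.snd_add] at huv ⊢
  rcases hup with h | h
  · refine ⟨(u.1 - 1, u.2), mem_of_add_unit_mem_add hI (Or.inl rfl) ?_, v + (1, 0),
      hI le_self_add hv, ?_⟩
    · convert hu using 1
      ext <;> simp only [Prod.fst_add, Prod.snd_add] <;> omega
    · simp only [taxicabDist, Nat.dist, Prod.fst_add, Prod.snd_add]
      omega
  · refine ⟨(u.1, u.2 - 1), mem_of_add_unit_mem_add hI (Or.inr rfl) ?_, v + (0, 1),
      hI le_self_add hv, ?_⟩
    · convert hu using 1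
      ext <;> simp only [Prod.fst_add, Prod.snd_add] <;> omega
    · simp only [taxicabDist, Nat.dist, Prod.fst_add, Prod.snd_add]
      omega

theorem add_mem_diff_add_diff (hI : IsUpperSet I) {p q : ℕ × ℕ} (hp : p ∉ I) (hq : q ∉ I + I)
    (hpq : p + q ∈ I + I) : p + q ∈ I \ (I + I) + I \ (I + I) := by
  let splittings : Set ((ℕ × ℕ) × (ℕ × ℕ)) := {x | x.1 ∈ I ∧ x.2 ∈ I ∧ x.1 + x.2 = p + q}
  have hne : splittings.Nonempty := by
    obtain ⟨u, hu, v, hv, huv⟩ := hpq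
    exact ⟨(u, v), hu, hv, huv⟩
  obtain ⟨⟨u, v⟩, ⟨hu, hv, huv⟩, hmin⟩ :=
    (InvImage.wf (fun x => taxicabDist x.1 p + taxicabDist x.2 q) wellFounded_lt).has_min
      splittings hne
  dsimp only at hu hv huv
  have hu' : u ∉ I + I := fun h => by
    obtain ⟨u', hu', v', hv', huv', hlt⟩ :=
      exists_closer_splitting hI huv h (fun hle => hp (hI hle hu)) hv
    exact hmin (u', v') ⟨hu', hv', huv'⟩ hlt
  have hv' : v ∉ I + I := fun h => by
    obtain ⟨v', hv', u', hu', hvu', hlt⟩ :=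
      exists_closer_splitting hI (by rw [add_comm, huv, add_comm]) h
        (fun hle => hq (hI.add_left' hle h)) hu
    exact hmin (u', v') ⟨hu', hv', by rw [add_comm, hvu', add_comm]⟩
      (by dsimp only [InvImage]; omega)
  exact ⟨u, ⟨hu, hu'⟩, v, ⟨hv, hv'⟩, huv⟩

end UpperSet

section NatProd

variable {S : AddSubmonoid (ℕ × ℕ)}

theorem IsIdealExtension.add_mem_atoms_union (hS : IsIdealExtension S) {p q : ℕ × ℕ}
    (hp : p ∉ Sstar S) (hq : q ∉ Sstar S + Sstar S) (hpq : p + q ∈ Sstar S) :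
    p + q ∈ Atoms S ∪ (Atoms S + Atoms S) := by
  by_cases h : p + q ∈ Sstar S + Sstar S
  · exact Or.inr (add_mem_diff_add_diff hS.isUpperSet hp hq h)
  · exact Or.inl ⟨hpq, h⟩

theorem IsIdealExtension.isGapAbsorbing (hS : IsIdealExtension S) : IsGapAbsorbing S := by
  have not_mem_sstar {g} (hg : g ∈ Gaps S) : g ∉ Sstar S := fun h => hg h.1
  refine ⟨?_, ?_⟩
  · rintro _ ⟨g, hg, g', hg', rfl⟩
    by_cases hgg' : g + g' ∈ S
    · have hne : g + g' ≠ 0 := fun h => hg ((add_eq_zero.mp h).1 ▸ S.zero_mem)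
      rcases hS.add_mem_atoms_union (not_mem_sstar hg)
        (fun h => hg' (sstar_add_sstar_subset h)) ⟨hgg', hne⟩ with hA | hAA
      exacts [Or.inl (Or.inr hA), Or.inr hAA]
    · exact Or.inl (Or.inl hgg')
  · rintro _ ⟨g, hg, a, ha, rfl⟩
    exact hS.add_mem_atoms_union (not_mem_sstar hg) ha.2 (add_comm a g ▸ hS a ha.1 g)

end NatProd

theorem statement19 (S : AddSubmonoid (ℕ × ℕ)) :
    IsGapAbsorbing S ↔ IsIdealExtension S :=
  ⟨fun h => isIdealExtension_of_gaps_add_atoms_subset h.2, IsIdealExtension.isGapAbsorbing⟩
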